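/- If two term nodes ⟨t₁, p₁⟩ and ⟨t₂, p₂⟩ are bisimilar, then free(t₁[p₁]) = free(t₂[p₂]). -/

import Mathlib

namespace HashAlpha

/-- g-terms: λ-terms with de Bruijn indices, extended with global variables `gvar t`. -/
inductive GTerm : Type
  | var : ℕ → GTerm
  | app : GTerm → GTerm → GTerm
  | lam : GTerm → GTerm
  | gvar : GTerm → GTerm
  deriving DecidableEq

/-- A g-term is a pure λ-term if it contains no global variables. -/
def GTerm.IsPure : GTerm → Prop
  | .var _ => True
  | .app a b => a.IsPure ∧ b.IsPure
  | .lam a => a.IsPure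
  | .gvar _ => False

/-- Directions for term positions: ↓, ↙, ↘. -/
inductive Dir : Type
  | down | left | right
  deriving DecidableEq

/-- A term position is a word over {↓, ↙, ↘}. -/
abbrev Pos := List Dir

/-- `|p|_λ`: the number of ↓'s in a position. -/
def lamDepth (p : Pos) : ℕ := p.count Dir.down

/-- Term indexing `t[p]` (partial; does not descend into global variables). -/
def GTerm.index : GTerm → Pos → Option GTerm
  | t, [] => some t
  | .app a _, .left :: p => a.index p
  | .app _ b, .right :: p => b.index p
  | .lam a, .down :: p => a.index p
  | _, _ => none

/-- `valid(t)`: the set of positions where `t[p]` is defined. -/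
def Valid (t : GTerm) : Set Pos := {p | (t.index p).isSome}

/-- `vars(t)`: positions of variables. -/
def Vars (t : GTerm) : Set Pos := {p | ∃ i, t.index p = some (.var i)}

/-- `free(t)`: positions of free variables. -/
def Free (t : GTerm) : Set Pos :=
  {p | ∃ i, t.index p = some (.var i) ∧ lamDepth p ≤ i}

/-- A term is closed if it has no free variables. -/
def Closed (t : GTerm) : Prop := Free t = ∅

/-- `p` is locally closed in `t`: every free variable of `t[p]` is also free in `t`. -/
def LocallyClosed (t : GTerm) (p : Pos) : Prop :=
  p ∈ Valid t ∧ ∀ u, t.index p = some u → ∀ q ∈ Free u, p ++ q ∈ Free t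

/-- Subtract `d0` from every free variable (`d` is the current binder depth). -/
def declift (d0 : ℕ) : GTerm → ℕ → GTerm
  | .var j, d => if d ≤ j then .var (j - d0) else .var j
  | .app a b, d => .app (declift d0 a d) (declift d0 b d)
  | .lam a, d => .lam (declift d0 a (d + 1))
  | .gvar a, _ => .gvar a

/-- The lift `⟨t⟩p`: equal to `t[p]` except every free variable of `t[p]` is
decremented by `|p|_λ`. -/
def liftAt (t : GTerm) (p : Pos) : Option GTerm :=
  (t.index p).map (fun u => declift (lamDepth p) u 0)

/-- Transition labels: ↓, ↙, ↘ and ↑. -/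
inductive Lab : Type
  | down | left | right | up
  deriving DecidableEq

def Lab.ofDir : Dir → Lab
  | .down => .down
  | .left => .left
  | .right => .right

/-- Transitions between term nodes. -/
inductive Trans : GTerm × Pos → Lab → GTerm × Pos → Prop
  | dir (t : GTerm) (p : Pos) (x : Dir) :
      (p ++ [x]) ∈ Valid t → Trans (t, p) (Lab.ofDir x) (t, p ++ [x])
  | up (t : GTerm) (q r : Pos) :
      t.index (q ++ Dir.down :: r) = some (.var (lamDepth r)) →
      Trans (t, q ++ Dir.down :: r) Lab.up (t, q)

/-- `R` is a bisimulation. -/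
def IsBisim (R : GTerm × Pos → GTerm × Pos → Prop) : Prop :=
  ∀ n₁ n₂, R n₁ n₂ → ∀ x : Lab,
    (∀ n₁', Trans n₁ x n₁' → ∃ n₂', Trans n₂ x n₂' ∧ R n₁' n₂') ∧
    (∀ n₂', Trans n₂ x n₂' → ∃ n₁', Trans n₁ x n₁' ∧ R n₁' n₂')

/-- Two nodes are bisimilar when some bisimulation relates them. -/
def Bisim (n₁ n₂ : GTerm × Pos) : Prop := ∃ R, IsBisim R ∧ R n₁ n₂

/-- `(t, p)` is a term node: `t` is closed and `p ∈ valid(t)`. -/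
def IsNode (t : GTerm) (p : Pos) : Prop := Closed t ∧ p ∈ Valid t

/-- A single fork between term nodes (let-abs rule or closed rule). -/
def SingleFork (n₁ n₂ : GTerm × Pos) : Prop :=
  (∃ t p q₁ q₂ r u,
      n₁ = (t, p ++ q₁ ++ r) ∧ n₂ = (t, p ++ q₂ ++ r) ∧
      IsNode t (p ++ q₁ ++ r) ∧ IsNode t (p ++ q₂ ++ r) ∧
      t.index p = some u ∧ LocallyClosed u q₁ ∧ liftAt u q₁ = liftAt u q₂) ∨
  (∃ t₁ t₂ p₁ p₂ r u,
      n₁ = (t₁, p₁ ++ r) ∧ n₂ = (t₂, p₂ ++ r) ∧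
      IsNode t₁ (p₁ ++ r) ∧ IsNode t₂ (p₂ ++ r) ∧
      t₁.index p₁ = some u ∧ Closed u ∧ t₂.index p₂ = some u)

/-- Fork equivalence: the transitive closure of single forks. -/
def ForkEquiv : GTerm × Pos → GTerm × Pos → Prop := Relation.TransGen SingleFork

/-- Shift free variables ≥ `c` up by `d`. -/
def shiftAux (c d : ℕ) : GTerm → GTerm
  | .var j => if j < c then .var j else .var (j + d)
  | .app a b => .app (shiftAux c d a) (shiftAux c d b)
  | .lam a => .lam (shiftAux (c + 1) d a)
  | .gvar a => .gvar a

/-- Capture-avoiding substitution of free variable `i` by `u` (at current depth `d`). -/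
def substAux (i : ℕ) (u : GTerm) : ℕ → GTerm → GTerm
  | d, .var j => if j = i + d then shiftAux 0 d u else .var j
  | d, .app a b => .app (substAux i u d a) (substAux i u d b)
  | d, .lam a => .lam (substAux i u (d + 1) a)
  | _, .gvar a => .gvar a

/-- `t[i := u]`: capture-avoiding substitution of variable `i` by `u` in `t`. -/
def subst (i : ℕ) (u : GTerm) (t : GTerm) : GTerm := substAux i u 0 t

/-- Simultaneous capture-avoiding substitution of variable `i` by `σᵢ`
(at current depth `d`). -/
def msubstAux (σ : List GTerm) : ℕ → GTerm → GTerm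
  | d, .var j =>
      if j < d then .var j else shiftAux 0 d (σ.getD (j - d) (.var (j - d)))
  | d, .app a b => .app (msubstAux σ d a) (msubstAux σ d b)
  | d, .lam a => .lam (msubstAux σ (d + 1) a)
  | _, .gvar a => .gvar a

/-- `tσ`: simultaneous substitution of each variable `i` by the `i`-th element of `σ`. -/
def msubst (σ : List GTerm) (t : GTerm) : GTerm := msubstAux σ 0 t

/-- Term size (the term summary `|t|`); global variables count as leaves. -/
def gsize : GTerm → ℕ
  | .var _ => 1
  | .gvar _ => 1
  | .app a b => gsize a + gsize b + 1
  | .lam a => gsize a + 1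

theorem gsize_shiftAux (c d : ℕ) (t : GTerm) : gsize (shiftAux c d t) = gsize t := by
  induction t generalizing c with
  | var j => simp only [shiftAux]; split <;> rfl
  | app a b iha ihb => simp [shiftAux, gsize, iha, ihb]
  | lam a ih => simp [shiftAux, gsize, ih]
  | gvar a => rfl

theorem gsize_substAux_gvar (i : ℕ) (w : GTerm) (d : ℕ) (t : GTerm) :
    gsize (substAux i (.gvar w) d t) = gsize t := by
  induction t generalizing d with
  | var j => simp only [substAux]; split <;> rfl
  | app a b iha ihb => simp [substAux, gsize, iha, ihb]
  | lam a ih => simp [substAux, gsize, ih]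
  | gvar a => rfl

theorem gsize_msubstAux (σ : List GTerm) (h : ∀ u ∈ σ, ∃ w, u = .gvar w)
    (d : ℕ) (t : GTerm) : gsize (msubstAux σ d t) = gsize t := by
  induction t generalizing d with
  | var j =>
    simp only [msubstAux]
    split
    · rfl
    · rw [gsize_shiftAux]
      rcases Nat.lt_or_ge (j - d) σ.length with hl | hl
      · rw [List.getD_eq_getElem _ _ hl]
        obtain ⟨w, hw⟩ := h _ (List.getElem_mem hl)
        rw [hw]; rfl
      · rw [List.getD_eq_default _ _ hl]; rfl
  | app a b iha ihb => simp [msubstAux, gsize, iha, ihb]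
  | lam a ih => simp [msubstAux, gsize, ih]
  | gvar a => rfl

theorem gsize_msubst (σ : List GTerm) (h : ∀ u ∈ σ, ∃ w, u = .gvar w)
    (t : GTerm) : gsize (msubst σ t) = gsize t :=
  gsize_msubstAux σ h 0 t

/-- The naive globalization procedure. -/
def globalizeNaive : GTerm → GTerm
  | .lam t => .lam (globalizeNaive (subst 0 (.gvar (.lam t)) t))
  | .app t u => .app (globalizeNaive t) (globalizeNaive u)
  | .gvar t => .gvar t
  | .var i => .var i
termination_by t => gsize t
decreasing_by
  · simp only [subst, gsize_substAux_gvar, gsize]; omega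
  · simp only [gsize]; omega
  · simp only [gsize]; omega

/-- The strongly connected component of a closed g-term: positions all of whose
nonempty prefixes index open terms. -/
def SCC (t : GTerm) : Set Pos :=
  {p | p ∈ Valid t ∧ ∀ p' u, p' ≠ [] → p' <+: p → t.index p' = some u → ¬ Closed u}

/-- `duplicates(t)`: strict subterms in the SCC of `t` whose term summary (size)
is not unique within the SCC. -/
def duplicates (t : GTerm) : Set GTerm :=
  {u | ∃ p q v, p ∈ SCC t ∧ q ∈ SCC t ∧ p ≠ [] ∧ q ≠ [] ∧ p ≠ q ∧
      t.index p = some u ∧ t.index q = some v ∧ gsize u = gsize v}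

open Classical in
mutual
/-- Efficient globalization. -/
noncomputable def globalize (r : GTerm) : GTerm :=
  globalizeScc r [] (by simp) r
termination_by (gsize r, 2)
decreasing_by
  apply Prod.Lex.right; omega

noncomputable def globalizeScc (r : GTerm) (σ : List GTerm)
    (h : ∀ u ∈ σ, ∃ w, u = GTerm.gvar w) : GTerm → GTerm
  | .lam t => .lam (globalizeStep r (.gvar (.app r t) :: σ)
      (by
        intro u hu
        rcases List.mem_cons.mp hu with h' | h'
        · exact ⟨_, h'⟩
        · exact h u h') t)
  | .app t u => .app (globalizeStep r σ h t) (globalizeStep r σ h u)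
  | .gvar t => .gvar t
  | .var i => msubst σ (.var i)
termination_by t => (gsize t, 1)
decreasing_by
  · apply Prod.Lex.left; simp only [gsize]; omega
  · apply Prod.Lex.left; simp only [gsize]; omega
  · apply Prod.Lex.left; simp only [gsize]; omega

noncomputable def globalizeStep (r : GTerm) (σ : List GTerm)
    (h : ∀ u ∈ σ, ∃ w, u = GTerm.gvar w) (t : GTerm) : GTerm :=
  if Closed t ∨ t ∈ duplicates r then globalize (msubst σ t)
  else globalizeScc r σ h t
termination_by (gsize t, 3)
decreasing_by
  · rw [gsize_msubst σ h]; apply Prod.Lex.right; omega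
  · apply Prod.Lex.right; omega
end

/-!
Let `q` be a free variable position of `t₁[p₁]`. As `t₁` is closed, the variable is bound by a
λ at some `a₁ ↓` on `p₁`, so `⟨t₁, p₁q⟩ →↑ ⟨t₁, a₁⟩`. Walking along `q` and then taking the
↑-step through the bisimulation yields `⟨t₂, p₂q⟩ →↑ ⟨t₂, a₂⟩` with `⟨t₁, a₁⟩` bisimilar to
`⟨t₂, a₂⟩`. If the binder `a₂ ↓` lay inside `t₂[p₂]`, say `a₂ = p₂q'`, walking back along `q'`
would make `⟨t₁, a₁⟩` bisimilar to its strict descendant `⟨t₁, p₁q'⟩`. That is impossible: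
bisimilar nodes index subterms with the same valid positions, hence of the same size.
-/

theorem lamDepth_append (p q : Pos) : lamDepth (p ++ q) = lamDepth p + lamDepth q :=
  List.count_append ..

theorem lamDepth_down_cons (r : Pos) : lamDepth (Dir.down :: r) = lamDepth r + 1 :=
  List.count_cons_self ..

theorem exists_eq_append_down_cons_of_lt_lamDepth {p : Pos} {i : ℕ} (h : i < lamDepth p) :
    ∃ a r, p = a ++ Dir.down :: r ∧ lamDepth r = i := by
  induction p with
  | nil => simp [lamDepth] at h
  | cons x p ih =>
    by_cases h' : i < lamDepth p
    · obtain ⟨a, r, rfl, hr⟩ := ih h'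
      exact ⟨x :: a, r, rfl, hr⟩
    · cases x with
      | down => exact ⟨[], p, rfl, by rw [lamDepth_down_cons] at h; omega⟩
      | left | right => exact absurd (by simpa [lamDepth] using h) h'

theorem _root_.List.append_cons_eq_append {α : Type*} {a r p q : List α} {x : α}
    (h : a ++ x :: r = p ++ q) :
    (∃ s, p = a ++ x :: s ∧ r = s ++ q) ∨ (∃ q', q = q' ++ x :: r ∧ a = p ++ q') := by
  rcases List.append_eq_append_iff.mp h with ⟨_ | ⟨y, s⟩, rfl, h'⟩ | ⟨q', rfl, rfl⟩
  · exact Or.inr ⟨[], by simpa using h'.symm, by simp⟩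
  · obtain ⟨rfl, rfl⟩ := List.cons_eq_cons.mp h'
    exact Or.inl ⟨s, rfl, rfl⟩
  · exact Or.inr ⟨q', rfl, rfl⟩

namespace GTerm

theorem index_append (t : GTerm) (p q : Pos) :
    t.index (p ++ q) = (t.index p).bind (·.index q) := by
  induction p generalizing t with
  | nil => simp [GTerm.index]
  | cons x p ih => cases x <;> cases t <;> simp [GTerm.index, ih]

theorem index_append_of_index_eq {t u : GTerm} {p : Pos} (h : t.index p = some u) (q : Pos) :
    t.index (p ++ q) = u.index q := by
  rw [index_append, h, Option.bind_some]

theorem gsize_index_le {t u : GTerm} {q : Pos} (h : t.index q = some u) :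
    gsize u ≤ gsize t := by
  induction q generalizing t with
  | nil => simp only [GTerm.index, Option.some.injEq] at h; exact h ▸ le_rfl
  | cons x q ih =>
    cases x <;> cases t <;> simp only [GTerm.index, reduceCtorEq] at h <;>
      (have := ih h; simp only [gsize]; omega)

theorem gsize_index_lt {t u : GTerm} {q : Pos} (hq : q ≠ []) (h : t.index q = some u) :
    gsize u < gsize t := by
  obtain ⟨x, q, rfl⟩ := List.exists_cons_of_ne_nil hq
  cases x <;> cases t <;> simp only [GTerm.index, reduceCtorEq] at h <;>
    (have := gsize_index_le h; simp only [gsize]; omega)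

end GTerm

open GTerm

theorem mem_valid_append_iff {t u : GTerm} {p : Pos} (h : t.index p = some u) (q : Pos) :
    p ++ q ∈ Valid t ↔ q ∈ Valid u := by
  simp only [Valid, Set.mem_ofPred_eq, index_append_of_index_eq h]

theorem mem_valid_of_append_mem_valid {t : GTerm} {p q : Pos} (h : p ++ q ∈ Valid t) :
    p ∈ Valid t := by
  simp only [Valid, Set.mem_ofPred_eq, index_append] at h ⊢
  exact Option.isSome_of_isSome_bind h

theorem gsize_eq_of_valid_eq {u₁ u₂ : GTerm} (h : Valid u₁ = Valid u₂) :
    gsize u₁ = gsize u₂ := by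
  induction u₁ generalizing u₂ <;> cases u₂
  case app.app a b iha ihb c d =>
    have hac := iha (Set.ext fun q => by
      simpa [Valid, GTerm.index] using Set.ext_iff.mp h (.left :: q))
    have hbd := ihb (Set.ext fun q => by
      simpa [Valid, GTerm.index] using Set.ext_iff.mp h (.right :: q))
    simp only [gsize, hac, hbd]
  case lam.lam a iha c =>
    have hac := iha (Set.ext fun q => by
      simpa [Valid, GTerm.index] using Set.ext_iff.mp h (.down :: q))
    simp only [gsize, hac]
  all_goals
    first
    | rfl
    | (have hl := Set.ext_iff.mp h [.left]; have hd := Set.ext_iff.mp h [.down]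
       simp [Valid, GTerm.index] at hl hd)

theorem lt_lamDepth_of_closed {t : GTerm} {p : Pos} {i : ℕ} (ht : Closed t)
    (h : t.index p = some (.var i)) : i < lamDepth p := by
  by_contra hle
  exact (Set.eq_empty_iff_forall_notMem.mp ht) p ⟨i, h, not_lt.mp hle⟩

theorem Trans.dir_inv {n n' : GTerm × Pos} {x : Dir} (h : Trans n (Lab.ofDir x) n') :
    n' = (n.1, n.2 ++ [x]) ∧ n.2 ++ [x] ∈ Valid n.1 := by
  generalize hl : Lab.ofDir x = l at h
  cases h with
  | dir t p y hv =>
    obtain rfl : x = y := by cases x <;> cases y <;> cases hl <;> rfl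
    exact ⟨rfl, hv⟩
  | up => cases x <;> cases hl

theorem Trans.up_inv {n n' : GTerm × Pos} (h : Trans n Lab.up n') :
    ∃ a r, n.2 = a ++ Dir.down :: r ∧
      n.1.index n.2 = some (.var (lamDepth r)) ∧ n' = (n.1, a) := by
  generalize hl : Lab.up = l at h
  cases h with
  | dir _ _ y => cases y <;> cases hl
  | up t q r hv => exact ⟨q, r, rfl, hv, rfl⟩

namespace Bisim

variable {n₁ n₂ n₃ : GTerm × Pos}

theorem symm (h : Bisim n₁ n₂) : Bisim n₂ n₁ := by
  obtain ⟨R, hR, hn⟩ := h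
  exact ⟨fun a b => R b a, fun m₁ m₂ hm x => (hR m₂ m₁ hm x).symm, hn⟩

theorem trans (h₁₂ : Bisim n₁ n₂) (h₂₃ : Bisim n₂ n₃) : Bisim n₁ n₃ := by
  obtain ⟨R, hR, hn₁₂⟩ := h₁₂
  obtain ⟨S, hS, hn₂₃⟩ := h₂₃
  refine ⟨Relation.Comp R S, fun a c ⟨b, hab, hbc⟩ x => ⟨fun a' ha' => ?_, fun c' hc' => ?_⟩,
    n₂, hn₁₂, hn₂₃⟩
  · obtain ⟨b', hb', hab'⟩ := (hR a b hab x).1 a' ha'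
    obtain ⟨c', hc', hbc'⟩ := (hS b c hbc x).1 b' hb'
    exact ⟨c', hc', b', hab', hbc'⟩
  · obtain ⟨b', hb', hbc'⟩ := (hS b c hbc x).2 c' hc'
    obtain ⟨a', ha', hab'⟩ := (hR a b hab x).2 b' hb'
    exact ⟨a', ha', b', hab', hbc'⟩

theorem step {n₁' : GTerm × Pos} {x : Lab} (h : Bisim n₁ n₂) (ht : Trans n₁ x n₁') :
    ∃ n₂', Trans n₂ x n₂' ∧ Bisim n₁' n₂' := by
  obtain ⟨R, hR, hn⟩ := h
  obtain ⟨n₂', ht', hr'⟩ := (hR n₁ n₂ hn x).1 n₁' ht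
  exact ⟨n₂', ht', R, hR, hr'⟩

variable {t₁ t₂ : GTerm} {p₁ p₂ : Pos}

theorem dir (hb : Bisim (t₁, p₁) (t₂, p₂)) {x : Dir} (hv : p₁ ++ [x] ∈ Valid t₁) :
    Bisim (t₁, p₁ ++ [x]) (t₂, p₂ ++ [x]) ∧ p₂ ++ [x] ∈ Valid t₂ := by
  obtain ⟨n₂', ht, hb'⟩ := hb.step (Trans.dir t₁ p₁ x hv)
  obtain ⟨rfl, hv'⟩ := ht.dir_inv
  exact ⟨hb', hv'⟩

theorem append (hb : Bisim (t₁, p₁) (t₂, p₂)) {q : Pos} (hv : p₁ ++ q ∈ Valid t₁) :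
    Bisim (t₁, p₁ ++ q) (t₂, p₂ ++ q) := by
  induction q using List.reverseRecOn with
  | nil => simpa using hb
  | append_singleton q x ih =>
    simp only [← List.append_assoc] at hv ⊢
    exact (ih (mem_valid_of_append_mem_valid hv)).dir hv |>.1

theorem append_mem_valid (hb : Bisim (t₁, p₁) (t₂, p₂)) {q : Pos} (hq : q ≠ [])
    (hv : p₁ ++ q ∈ Valid t₁) : p₂ ++ q ∈ Valid t₂ := by
  obtain ⟨q, x, rfl⟩ := (List.eq_nil_or_concat' q).resolve_left hq
  simp only [← List.append_assoc] at hv ⊢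
  exact ((hb.append (mem_valid_of_append_mem_valid hv)).dir hv).2

theorem not_append {t : GTerm} {a w : Pos} (hw : w ≠ []) (hv : a ++ w ∈ Valid t) :
    ¬ Bisim (t, a) (t, a ++ w) := by
  intro hb
  obtain ⟨v, hva⟩ := Option.isSome_iff_exists.mp (mem_valid_of_append_mem_valid hv)
  obtain ⟨v', hvw⟩ := Option.isSome_iff_exists.mp hv
  have hshape : Valid v = Valid v' := Set.ext fun w' => by
    rcases eq_or_ne w' [] with rfl | hw'
    · simp [Valid, GTerm.index]
    · rw [← mem_valid_append_iff hva, ← mem_valid_append_iff hvw]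
      exact ⟨hb.append_mem_valid hw', hb.symm.append_mem_valid hw'⟩
  have hsub : v.index w = some v' := index_append_of_index_eq hva w ▸ hvw
  exact (gsize_index_lt hw hsub).ne' (gsize_eq_of_valid_eq hshape)

end Bisim

theorem Bisim.free_subset {t₁ t₂ u₁ u₂ : GTerm} {p₁ p₂ : Pos} (ht₁ : Closed t₁)
    (hb : Bisim (t₁, p₁) (t₂, p₂)) (hu₁ : t₁.index p₁ = some u₁)
    (hu₂ : t₂.index p₂ = some u₂) : Free u₁ ⊆ Free u₂ := by
  rintro q ⟨i, hq, hiq⟩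
  have hidx₁ : t₁.index (p₁ ++ q) = some (.var i) := index_append_of_index_eq hu₁ q ▸ hq
  have hv₁ : p₁ ++ q ∈ Valid t₁ := by simp [Valid, hidx₁]
  obtain ⟨a₁, r₁, hsplit₁, rfl⟩ :=
    exists_eq_append_down_cons_of_lt_lamDepth (lt_lamDepth_of_closed ht₁ hidx₁)
  obtain ⟨s, hp₁, -⟩ : ∃ s, p₁ = a₁ ++ Dir.down :: s ∧ r₁ = s ++ q := by
    rcases List.append_cons_eq_append hsplit₁.symm with h | ⟨q', rfl, -⟩
    · exact h
    · rw [lamDepth_append, lamDepth_down_cons] at hiq; omega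
  have hup : Trans (t₁, p₁ ++ q) Lab.up (t₁, a₁) := hsplit₁ ▸ Trans.up t₁ a₁ r₁ (hsplit₁ ▸ hidx₁)
  obtain ⟨_, ht₂, hb'⟩ := (hb.append hv₁).step hup
  obtain ⟨a₂, r₂, hsplit₂, hidx₂, rfl⟩ := ht₂.up_inv
  refine ⟨lamDepth r₂, (index_append_of_index_eq hu₂ q).symm.trans hidx₂, ?_⟩
  rcases List.append_cons_eq_append hsplit₂.symm with ⟨s₂, -, rfl⟩ | ⟨q', rfl, rfl⟩
  · rw [lamDepth_append]; omega
  · -- the binder lies inside `t₂[p₂]`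
    have hv' : p₁ ++ q' ∈ Valid t₁ :=
      mem_valid_of_append_mem_valid (by rwa [← List.append_assoc] at hv₁)
    subst hp₁
    have hne := Bisim.not_append (t := t₁) (a := a₁) (w := Dir.down :: (s ++ q')) (by simp)
      (by simpa using hv')
    exact (hne (by simpa using hb'.trans (hb.append hv').symm)).elim

/-- bisimilar term nodes have subjects with equal sets of
free-variable positions. -/
theorem bisim_free_eq (t₁ t₂ : GTerm) (p₁ p₂ : Pos)
    (h₁ : t₁.IsPure) (h₂ : t₂.IsPure)
    (n₁ : IsNode t₁ p₁) (n₂ : IsNode t₂ p₂)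
    (hb : Bisim (t₁, p₁) (t₂, p₂)) :
    ∀ u₁ u₂, t₁.index p₁ = some u₁ → t₂.index p₂ = some u₂ →
      Free u₁ = Free u₂ :=
  fun _ _ hu₁ hu₂ =>
    (hb.free_subset n₁.1 hu₁ hu₂).antisymm (hb.symm.free_subset n₂.1 hu₂ hu₁)

end HashAlpha
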